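/- arXiv:2201.04238 — 3 statements merged into one kernel-verified Lean document; each statement's English description precedes it below -/
import Mathlib

section
/- Let a < c < b < d be reals and let P : (a,d) → M_{n×n}(ℝ) be a continuous matrix function such that each P(t) is an orthogonal projection of constant rank k. Suppose Im(P(t)) admits a continuous choice of basis γ₁, …, γ_k : (a,b) → ℝⁿ on (a,b), and also admits some continuous choice of basis on (c,d). Then γ₁, …, γ_k may be extended to continuous functions on (a,d) that form a basis of Im(P(t)) for every t ∈ (a,d). -/
open scoped RealInnerProductSpace BigOperators

/-- The Euclidean operator norm of a real matrix: `sup {‖Ax‖ : ‖x‖ = 1}`. -/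
noncomputable def opNorm {m n : ℕ} (A : Matrix (Fin m) (Fin n) ℝ) : ℝ :=
  sSup {c : ℝ | ∃ x : EuclideanSpace ℝ (Fin n), ‖x‖ = 1 ∧ c = ‖Matrix.toEuclideanLin A x‖}

/-- The matrix of the orthogonal projection of `ℝⁿ` onto the subspace `U`. -/
noncomputable def projMatrix {n : ℕ} (U : Submodule ℝ (EuclideanSpace ℝ (Fin n))) :
    Matrix (Fin n) (Fin n) ℝ :=
  Matrix.toEuclideanLin.symm (U.subtype ∘ₗ (U.orthogonalProjection).toLinearMap)

/-- The minimal stretch of a matrix `A` on a subspace `U`: `inf {‖Ax‖ : x ∈ U, ‖x‖ = 1}`. -/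
noncomputable def minStretch {m n : ℕ} (A : Matrix (Fin m) (Fin n) ℝ)
    (U : Submodule ℝ (EuclideanSpace ℝ (Fin n))) : ℝ :=
  sInf {c : ℝ | ∃ x ∈ U, ‖x‖ = 1 ∧ c = ‖Matrix.toEuclideanLin A x‖}

/-!
At a point `s` of the overlap both families are bases of the same space, so `γ(s) = A β(s)` for an
invertible transition matrix `A`. Following `γ` up to `s` and `A β` after it gives a family that is
continuous, because the two pieces agree at `s`, and is a basis everywhere, because an invertible
matrix carries bases of a space to bases of the same space.
-/

open Set Submodule Matrix

section
variable {R M ι : Type*} [CommRing R] [AddCommGroup M] [Module R M] [Fintype ι]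

theorem sum_smul_eq_linearCombination_row (w : ι → M) (A : Matrix ι ι R) :
    (fun i => ∑ j, A i j • w j) = Fintype.linearCombination R w ∘ A.row := by
  ext i; simp [Fintype.linearCombination_apply]

theorem LinearIndependent.sum_smul_of_isUnit [DecidableEq ι] {w : ι → M}
    (hw : LinearIndependent R w) {A : Matrix ι ι R} (hA : IsUnit A) :
    LinearIndependent R fun i => ∑ j, A i j • w j := by
  rw [sum_smul_eq_linearCombination_row]
  exact (A.linearIndependent_rows_of_isUnit hA).map' _ (LinearMap.ker_eq_bot.mpr
    (linearIndependent_iff_injective_fintypeLinearCombination.mp hw))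

theorem span_range_sum_smul_of_isUnit [DecidableEq ι] (w : ι → M) {A : Matrix ι ι R}
    (hA : IsUnit A) :
    span R (range fun i => ∑ j, A i j • w j) = span R (range w) := by
  have hrows : span R (range A.row) = ⊤ := by
    rw [← range_vecMulLinear, LinearMap.range_eq_top]
    exact vecMul_surjective_iff_isUnit.mpr hA
  rw [sum_smul_eq_linearCombination_row, range_comp, ← map_span, hrows, Submodule.map_top,
    Fintype.range_linearCombination]

theorem exists_isUnit_eq_sum_smul_of_span_eq [DecidableEq ι] {v w : ι → M}
    (hv : LinearIndependent R v) (hw : LinearIndependent R w)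
    (hvw : span R (range v) = span R (range w)) :
    ∃ A : Matrix ι ι R, IsUnit A ∧ ∀ i, v i = ∑ j, A i j • w j := by
  let bv : Module.Basis ι R (span R (range w)) :=
    (Module.Basis.span hv).map (LinearEquiv.ofEq _ _ hvw)
  let bw : Module.Basis ι R (span R (range w)) := Module.Basis.span hw
  refine ⟨(bw.toMatrix bv)ᵀ, (isUnit_transpose _).mpr
    (@isUnit_of_invertible _ _ _ (bw.invertibleToMatrix bv)), fun i => ?_⟩
  have h := congrArg Subtype.val (bw.sum_toMatrix_smul_self bv i)
  simpa [bv, bw, Module.Basis.span_apply] using h.symm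
end

theorem ContinuousOn.piecewise_Iic {α β : Type*} [TopologicalSpace α] [LinearOrder α]
    [OrderClosedTopology α] [TopologicalSpace β] {f g : α → β} {u : Set α} {x : α}
    (hf : ContinuousOn f (u ∩ Iic x)) (hg : ContinuousOn g (u ∩ Ici x)) (hfg : f x = g x) :
    ContinuousOn ((Iic x).piecewise f g) u := by
  refine ContinuousOn.piecewise (fun y hy => ?_) ?_ ?_
  · rw [frontier_Iic_subset x hy.2, hfg]
  · rwa [closure_Iic]
  · refine hg.mono (inter_subset_inter_right _ ?_)
    rw [compl_Iic]
    exact closure_minimal Ioi_subset_Ici_self isClosed_Ici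

theorem extend_continuous_basis_general {n k : ℕ} (a c b d : ℝ)
    (hac : a < c) (hcb : c < b) (hbd : b < d)
    (P : ℝ → Matrix (Fin n) (Fin n) ℝ)
    (γ : Fin k → ℝ → EuclideanSpace ℝ (Fin n))
    (hγcont : ∀ i, ContinuousOn (γ i) (Set.Ioo a b))
    (hγbasis : ∀ t ∈ Set.Ioo a b, LinearIndependent ℝ (fun i => γ i t) ∧
      Submodule.span ℝ (Set.range fun i => γ i t) =
        LinearMap.range (Matrix.toEuclideanLin (P t)))
    (β : Fin k → ℝ → EuclideanSpace ℝ (Fin n))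
    (hβcont : ∀ i, ContinuousOn (β i) (Set.Ioo c d))
    (hβbasis : ∀ t ∈ Set.Ioo c d, LinearIndependent ℝ (fun i => β i t) ∧
      Submodule.span ℝ (Set.range fun i => β i t) =
        LinearMap.range (Matrix.toEuclideanLin (P t))) :
    ∃ γ' : Fin k → ℝ → EuclideanSpace ℝ (Fin n),
      (∀ i, ContinuousOn (γ' i) (Set.Ioo a d)) ∧
      (∀ t ∈ Set.Ioo a d, LinearIndependent ℝ (fun i => γ' i t) ∧
        Submodule.span ℝ (Set.range fun i => γ' i t) =
          LinearMap.range (Matrix.toEuclideanLin (P t))) ∧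
      ∀ i, ∀ t ∈ Set.Ioc a c, γ' i t = γ i t := by
  obtain ⟨hcs, hsb⟩ : c < (c + b) / 2 ∧ (c + b) / 2 < b := ⟨by linarith, by linarith⟩
  set s := (c + b) / 2
  obtain ⟨hγli, hγspan⟩ := hγbasis s ⟨hac.trans hcs, hsb⟩
  obtain ⟨hβli, hβspan⟩ := hβbasis s ⟨hcs, hsb.trans hbd⟩
  obtain ⟨A, hA, hγβ⟩ :=
    exists_isUnit_eq_sum_smul_of_span_eq hγli hβli (hγspan.trans hβspan.symm)
  let δ : Fin k → ℝ → EuclideanSpace ℝ (Fin n) := fun i t => ∑ j, A i j • β j t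
  refine ⟨fun i => (Iic s).piecewise (γ i) (δ i), fun i => ?_, fun t ht => ?_,
    fun i t ht => piecewise_eq_of_mem _ _ _ (ht.2.trans hcs.le)⟩
  · refine ContinuousOn.piecewise_Iic ((hγcont i).mono ?_) ?_ (hγβ i)
    · exact fun t ht => ⟨ht.1.1, ht.2.trans_lt hsb⟩
    · refine continuousOn_finsetSum _ fun j _ => ((hβcont j).mono ?_).const_smul (A i j)
      exact fun t ht => ⟨hcs.trans_le ht.2, ht.1.2⟩
  · rcases le_or_gt t s with hts | hst
    · simp only [piecewise, mem_Iic, hts, if_true]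
      exact hγbasis t ⟨ht.1, hts.trans_lt hsb⟩
    · simp only [piecewise, mem_Iic, not_le.mpr hst, if_false]
      obtain ⟨hli, hspan⟩ := hβbasis t ⟨hcs.trans hst, ht.2⟩
      exact ⟨hli.sum_smul_of_isUnit hA, (span_range_sum_smul_of_isUnit _ hA).trans hspan⟩

/-- Two continuous choices of basis for the images of a continuous family of rank-`k`
orthogonal projections, defined on overlapping intervals `(a,b)` and `(c,d)` with
`a < c < b < d`, can be stitched: the basis `γ` on `(a,b)` extends to a continuous choice
of basis on all of `(a,d)` (agreeing with `γ` up to the overlap). -/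
theorem extend_continuous_basis {n k : ℕ} (a c b d : ℝ)
    (hac : a < c) (hcb : c < b) (hbd : b < d)
    (P : ℝ → Matrix (Fin n) (Fin n) ℝ) (hPcont : ContinuousOn P (Set.Ioo a d))
    (hPproj : ∀ t ∈ Set.Ioo a d,
      P t * P t = P t ∧ (P t).transpose = P t ∧ (P t).rank = k)
    (γ : Fin k → ℝ → EuclideanSpace ℝ (Fin n))
    (hγcont : ∀ i, ContinuousOn (γ i) (Set.Ioo a b))
    (hγbasis : ∀ t ∈ Set.Ioo a b, LinearIndependent ℝ (fun i => γ i t) ∧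
      Submodule.span ℝ (Set.range fun i => γ i t) =
        LinearMap.range (Matrix.toEuclideanLin (P t)))
    (β : Fin k → ℝ → EuclideanSpace ℝ (Fin n))
    (hβcont : ∀ i, ContinuousOn (β i) (Set.Ioo c d))
    (hβbasis : ∀ t ∈ Set.Ioo c d, LinearIndependent ℝ (fun i => β i t) ∧
      Submodule.span ℝ (Set.range fun i => β i t) =
        LinearMap.range (Matrix.toEuclideanLin (P t))) :
    ∃ γ' : Fin k → ℝ → EuclideanSpace ℝ (Fin n),
      (∀ i, ContinuousOn (γ' i) (Set.Ioo a d)) ∧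
      (∀ t ∈ Set.Ioo a d, LinearIndependent ℝ (fun i => γ' i t) ∧
        Submodule.span ℝ (Set.range fun i => γ' i t) =
          LinearMap.range (Matrix.toEuclideanLin (P t))) ∧
      ∀ i, ∀ t ∈ Set.Ioc a c, γ' i t = γ i t :=
  extend_continuous_basis_general a c b d hac hcb hbd P γ hγcont hγbasis β hβcont hβbasis
end

section
/- Let X and Y be linear subspaces of ℝⁿ with dim X = dim Y = m. Then there exist linear subspaces X̃ ⊆ X and Ỹ ⊆ Y with dim X̃ ≥ ⌊m/2⌋ and dim Ỹ ≥ ⌊m/2⌋ such that X̃ is orthogonal to Ỹ (i.e. ⟨x, y⟩ = 0 for all x ∈ X̃, y ∈ Ỹ). -/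
open scoped RealInnerProductSpace BigOperators

/-!
Take any `X' ≤ X` of dimension `⌊m/2⌋` and put `Y' = Y ⊓ X'ᗮ`. Since `X'ᗮ` has codimension
`⌊m/2⌋`, cutting `Y` with it loses at most `⌊m/2⌋` dimensions, so `dim Y' ≥ m - ⌊m/2⌋ ≥ ⌊m/2⌋`.
-/

namespace Submodule

theorem exists_le_finrank_eq {K V : Type*} [DivisionRing K] [AddCommGroup V] [Module K V]
    (X : Submodule K V) [FiniteDimensional K X] {k : ℕ} (hk : k ≤ Module.finrank K X) :
    ∃ X' ≤ X, Module.finrank K X' = k := by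
  obtain ⟨f, hf⟩ := exists_linearIndependent_of_le_finrank hk
  refine ⟨span K (Set.range (X.subtype ∘ f)), ?_, ?_⟩
  · rw [span_le]
    rintro - ⟨i, rfl⟩
    exact (f i).2
  · rw [finrank_span_eq_card (hf.map' X.subtype X.ker_subtype), Fintype.card_fin]

theorem finrank_le_finrank_add_finrank_inf_orthogonal {𝕜 E : Type*} [RCLike 𝕜]
    [NormedAddCommGroup E] [InnerProductSpace 𝕜 E] [FiniteDimensional 𝕜 E]
    (Y K : Submodule 𝕜 E) :
    Module.finrank 𝕜 Y ≤ Module.finrank 𝕜 K + Module.finrank 𝕜 ↥(Y ⊓ Kᗮ) := by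
  have h_sup_inf := finrank_sup_add_finrank_inf_eq Y Kᗮ
  have h_sup_le := finrank_le (Y ⊔ Kᗮ)
  have h_compl := K.finrank_add_finrank_orthogonal
  omega

end Submodule

/-- Given two `m`-dimensional subspaces `X, Y` of `ℝⁿ`, there exist subspaces `X̃ ⊆ X` and
`Ỹ ⊆ Y` of dimensions at least `⌊m/2⌋` that are orthogonal to each other. -/
theorem exists_orthogonal_half_dimensional_subspaces {n m : ℕ}
    (X Y : Submodule ℝ (EuclideanSpace ℝ (Fin n)))
    (hX : Module.finrank ℝ X = m) (hY : Module.finrank ℝ Y = m) :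
    ∃ X' Y' : Submodule ℝ (EuclideanSpace ℝ (Fin n)),
      X' ≤ X ∧ Y' ≤ Y ∧
      m / 2 ≤ Module.finrank ℝ X' ∧ m / 2 ≤ Module.finrank ℝ Y' ∧
      ∀ x ∈ X', ∀ y ∈ Y', (inner ℝ x y : ℝ) = 0 := by
  obtain ⟨X', hX'X, hX'⟩ := X.exists_le_finrank_eq (k := m / 2) (by omega)
  have hY' := Y.finrank_le_finrank_add_finrank_inf_orthogonal X'
  refine ⟨X', Y ⊓ X'ᗮ, hX'X, inf_le_left, hX'.ge, by omega, ?_⟩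
  intro x hx y hy
  exact hy.2 x hx
end

section
/- Let X, Y be subspaces of ℝⁿ with dim X = dim Y = m, and let a < b be reals. Then there exists a continuous choice of m-dimensional subspaces {U(t)}_{t ∈ [a,b]} of ℝⁿ (i.e. the map t ↦ orthogonal projection onto U(t) is continuous) such that U(a) = X, U(b) = Y, and U(t) ⊆ X + Y for all t ∈ [a,b]. -/
open scoped RealInnerProductSpace BigOperators

/-! Two subspaces `X`, `Y` of equal dimension have a common complement `C` (induct on the
codimension, adding a vector outside `X ∪ Y`, which exists over an infinite field). With `P` the
projection onto `X` along `C`, `P` maps `Y` isomorphically onto `X`, so `Y` is the graph of a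
linear map `T : X → C`, and the graphs of `s • T`, `s ∈ [0, 1]`, move `X` to `Y` inside `X + Y`.
Parametrizing them by an affine family of injective matrices `A s`, the orthogonal projections
`A s * ((A s)ᵀ * A s)⁻¹ * (A s)ᵀ` depend continuously on `s`. -/

open Module Matrix Submodule

namespace Submodule

section Complement

variable {K V : Type*} [DivisionRing K] [Infinite K] [AddCommGroup V] [Module K V]

theorem exists_notMem_of_ne_top_of_ne_top {X Y : Submodule K V} (hX : X ≠ ⊤) (hY : Y ≠ ⊤) :
    ∃ v, v ∉ X ∧ v ∉ Y := by
  classical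
  simpa [Set.eq_univ_iff_forall] using
    Subspace.biUnion_ne_univ_of_top_notMem (s := {X, Y}) (by simp [hX.symm, hY.symm])

theorem exists_isCompl_isCompl_of_finrank_eq [FiniteDimensional K V] {X Y : Submodule K V}
    (hXY : finrank K X = finrank K Y) : ∃ C : Submodule K V, IsCompl X C ∧ IsCompl Y C := by
  induction hk : finrank K V - finrank K X generalizing X Y with
  | zero =>
    have hX : X = ⊤ := eq_top_of_finrank_eq (le_antisymm X.finrank_le (by omega))
    have hY : Y = ⊤ := eq_top_of_finrank_eq (le_antisymm Y.finrank_le (by omega))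
    exact ⟨⊥, hX ▸ isCompl_top_bot, hY ▸ isCompl_top_bot⟩
  | succ k ih =>
    have hX : X ≠ ⊤ := fun h => by rw [h, finrank_top] at hk; omega
    have hY : Y ≠ ⊤ := fun h => by rw [hXY, h, finrank_top] at hk; omega
    obtain ⟨v, hvX, hvY⟩ := exists_notMem_of_ne_top_of_ne_top hX hY
    obtain ⟨C, hXC, hYC⟩ := ih (X := X ⊔ K ∙ v) (Y := Y ⊔ K ∙ v)
      (by rw [finrank_sup_span_singleton hvX, finrank_sup_span_singleton hvY, hXY])
      (by rw [finrank_sup_span_singleton hvX]; omega)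
    exact ⟨(K ∙ v) ⊔ C,
      (disjoint_span_singleton_of_notMem hvX).isCompl_sup_right_of_isCompl_sup_left hXC,
      (disjoint_span_singleton_of_notMem hvY).isCompl_sup_right_of_isCompl_sup_left hYC⟩

end Complement

section GraphPath

variable {K V : Type*} [Field K] [AddCommGroup V] [Module K V] {X C : Submodule K V}

/-- When `Y` is also a complement of `C`, the range is the graph over `X` of `s` times the map
`X → C` whose graph is `Y`. -/
noncomputable def graphPath (hXC : IsCompl X C) (Y : Submodule K V) (s : K) : Y →ₗ[K] V :=
  (1 - s) • (X.projection C hXC ∘ₗ Y.subtype) + s • Y.subtype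

variable (hXC : IsCompl X C) (Y : Submodule K V)

theorem projection_comp_graphPath (s : K) :
    X.projection C hXC ∘ₗ graphPath hXC Y s = X.projection C hXC ∘ₗ Y.subtype := by
  ext y
  simp [graphPath, projection_apply_of_mem_left, ← add_smul]

theorem injective_graphPath (hYC : Disjoint Y C) (s : K) :
    Function.Injective (graphPath hXC Y s) := by
  have hP : Function.Injective (X.projection C hXC ∘ₗ Y.subtype) := by
    rw [← LinearMap.ker_eq_bot, LinearMap.ker_comp, ker_projection, ← disjoint_iff_comap_eq_bot]
    exact hYC
  rw [← projection_comp_graphPath hXC Y s, LinearMap.coe_comp] at hP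
  exact hP.of_comp

theorem range_graphPath_zero (hYC : Codisjoint Y C) :
    LinearMap.range (graphPath hXC Y 0) = X := by
  have hC : C.map (X.projection C hXC) = ⊥ :=
    LinearMap.le_ker_iff_map.mp (ker_projection hXC).ge
  have hX := range_projection hXC
  rw [LinearMap.range_eq_map, ← hYC.eq_top, map_sup, hC, sup_bot_eq] at hX
  simpa [graphPath, LinearMap.range_comp] using hX

theorem range_graphPath_one : LinearMap.range (graphPath hXC Y 1) = Y := by
  simp [graphPath]

theorem range_graphPath_le (s : K) : LinearMap.range (graphPath hXC Y s) ≤ X ⊔ Y := by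
  rintro _ ⟨y, rfl⟩
  exact add_mem (mem_sup_left (X.smul_mem _ (projection_apply_mem hXC y)))
    (mem_sup_right (Y.smul_mem _ y.2))

end GraphPath

end Submodule

theorem Matrix.posDef_transpose_mul_self {n m : ℕ} {A : Matrix (Fin n) (Fin m) ℝ}
    (hA : Function.Injective (toEuclideanLin A)) : (Aᵀ * A).PosDef := by
  have hmul : Function.Injective A.mulVec := fun v w h => by
    simpa using congrArg WithLp.ofLp (@hA (WithLp.toLp 2 v) (WithLp.toLp 2 w) (by simp [h]))
  simpa using PosDef.conjTranspose_mul_self A hmul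

theorem projMatrix_range_toEuclideanLin {n m : ℕ} {A : Matrix (Fin n) (Fin m) ℝ}
    (hA : Function.Injective (toEuclideanLin A)) :
    projMatrix (LinearMap.range (toEuclideanLin A)) = A * (Aᵀ * A)⁻¹ * Aᵀ := by
  set U := LinearMap.range (toEuclideanLin A)
  have hGram : Aᵀ * (A * (Aᵀ * A)⁻¹ * Aᵀ) = Aᵀ := by
    rw [← Matrix.mul_assoc, ← Matrix.mul_assoc,
      mul_nonsing_inv _ (posDef_transpose_mul_self hA).det_pos.ne'.isUnit, Matrix.one_mul]
  rw [projMatrix, LinearEquiv.symm_apply_eq]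
  ext1 v
  set w := toEuclideanLin (A * (Aᵀ * A)⁻¹ * Aᵀ) v
  have hw : w ∈ U :=
    ⟨toEuclideanLin ((Aᵀ * A)⁻¹ * Aᵀ) v, by simp [w, Matrix.mul_assoc]⟩
  have horth : v - w ∈ Uᗮ := by
    rw [Submodule.mem_orthogonal]
    rintro _ ⟨z, rfl⟩
    have hAdj : toEuclideanLin Aᵀ = LinearMap.adjoint (toEuclideanLin A) := by
      rw [← conjTranspose_eq_transpose_of_trivial, toEuclideanLin_conjTranspose_eq_adjoint]
    rw [← LinearMap.adjoint_inner_right, ← hAdj, map_sub]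
    simp [w, ← LinearMap.comp_apply, ← toLpLin_mul_same, hGram]
  simpa using Submodule.eq_starProjection_of_mem_orthogonal hw horth

theorem Continuous.projMatrix_range {α : Type*} [TopologicalSpace α] {n m : ℕ}
    {A : α → Matrix (Fin n) (Fin m) ℝ} (hA : Continuous A)
    (hinj : ∀ t, Function.Injective (toEuclideanLin (A t))) :
    Continuous fun t => projMatrix (LinearMap.range (toEuclideanLin (A t))) := by
  simp only [projMatrix_range_toEuclideanLin (hinj _)]
  have hGram : Continuous fun t => (A t)ᵀ * A t := hA.matrix_transpose.matrix_mul hA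
  have hInv : Continuous fun t => ((A t)ᵀ * A t)⁻¹ := by
    simp only [inv_def, Ring.inverse_eq_inv']
    exact (hGram.matrix_det.inv₀ fun t => (posDef_transpose_mul_self (hinj t)).det_pos.ne').smul
      hGram.matrix_adjugate
  exact (hA.matrix_mul hInv).matrix_mul hA.matrix_transpose

/-- Given two `m`-dimensional subspaces `X, Y` of `ℝⁿ` and reals `a < b`, there is a
continuous choice of `m`-dimensional subspaces `{U(t)}_{t ∈ [a,b]}` with `U(a) = X`,
`U(b) = Y`, and `U(t) ⊆ X + Y` for all `t ∈ [a,b]`. -/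
theorem continuous_traversal_of_subspaces {n m : ℕ}
    (X Y : Submodule ℝ (EuclideanSpace ℝ (Fin n)))
    (hX : Module.finrank ℝ X = m) (hY : Module.finrank ℝ Y = m)
    (a b : ℝ) (hab : a < b) :
    ∃ U : ℝ → Submodule ℝ (EuclideanSpace ℝ (Fin n)),
      ContinuousOn (fun t => projMatrix (U t)) (Set.Icc a b) ∧
      U a = X ∧ U b = Y ∧
      ∀ t ∈ Set.Icc a b, Module.finrank ℝ (U t) = m ∧ U t ≤ X ⊔ Y := by
  obtain ⟨C, hXC, hYC⟩ := Submodule.exists_isCompl_isCompl_of_finrank_eq (hX.trans hY.symm)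
  let β : EuclideanSpace ℝ (Fin m) ≃ₗ[ℝ] Y := LinearEquiv.ofFinrankEq _ _ (by simp [hY])
  let A (s : ℝ) : Matrix (Fin n) (Fin m) ℝ := toEuclideanLin.symm (graphPath hXC Y s ∘ₗ β)
  have hA : Continuous A := by
    have hAffine : A = fun s =>
        (1 - s) • toEuclideanLin.symm (X.projection C hXC ∘ₗ Y.subtype ∘ₗ β) +
          s • toEuclideanLin.symm (Y.subtype ∘ₗ β) := by
      funext s
      simp [A, graphPath, LinearMap.add_comp, LinearMap.smul_comp, LinearMap.comp_assoc]
    rw [hAffine]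
    fun_prop
  have hinj (s : ℝ) : Function.Injective (toEuclideanLin (A s)) := by
    simpa [A] using (injective_graphPath hXC Y hYC.disjoint s).comp β.injective
  have hrange (s : ℝ) :
      LinearMap.range (toEuclideanLin (A s)) = LinearMap.range (graphPath hXC Y s) := by
    simp [A, LinearMap.range_comp_of_range_eq_top]
  let σ (t : ℝ) : ℝ := (t - a) / (b - a)
  refine ⟨fun t => LinearMap.range (graphPath hXC Y (σ t)), ?_, ?_, ?_,
    fun t _ => ⟨?_, ?_⟩⟩
  · simp only [← hrange]
    exact (Continuous.projMatrix_range (hA.comp (by fun_prop)) (hinj <| σ ·)).continuousOn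
  · simpa [σ] using range_graphPath_zero hXC Y hYC.codisjoint
  · simpa [σ, div_self (sub_ne_zero.mpr hab.ne')] using range_graphPath_one hXC Y
  · rw [LinearMap.finrank_range_of_inj (injective_graphPath hXC Y hYC.disjoint _), hY]
  · exact range_graphPath_le hXC Y _
end
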